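/- arXiv:1208.6569 — 4 statements merged into one kernel-verified Lean document; each statement's English description precedes it below -/
import Mathlib

section
/- Let G and H be locally compact Hausdorff unimodular topological groups and π : G → H a continuous surjective open homomorphism with finite kernel. Let L be a discrete subgroup of G. If π(L) is a lattice in H, then L is a lattice in G. -/
open MeasureTheory

/-- The space of right cosets `Wg` of `W` in `G`. -/
abbrev RightQuotient {G : Type*} [Group G] (W : Subgroup G) : Type _ :=
  Quotient (QuotientGroup.rightRel W)

/-- Right translation action of `G` on the space of right cosets `W\G`. -/
def rightTranslate {G : Type*} [Group G] (W : Subgroup G) (g : G) :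
    RightQuotient W → RightQuotient W :=
  Quotient.map' (· * g) (fun a b h => by
    rw [QuotientGroup.rightRel_apply] at h ⊢
    simpa [mul_assoc] using h)

/-- `W` is a lattice in `G`: a discrete subgroup such that the right coset space `W\G`
carries a nonzero finite `G`-invariant Borel measure. -/
def IsLattice (G : Type*) [Group G] [TopologicalSpace G] (W : Subgroup G) : Prop :=
  DiscreteTopology W ∧
  ∃ ν : @Measure (RightQuotient W) (borel _),
    ν ≠ 0 ∧ ν Set.univ < ⊤ ∧
    ∀ (g : G) (E : Set (RightQuotient W)), MeasurableSet[borel _] E →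
      ν (rightTranslate W g ⁻¹' E) = ν E

/-!
The invariant measure on `L\G` is the pullback of the invariant measure `ν` on `π(L)\H` along
the finite-to-one map `L\G → π(L)\H`: a Borel set `E` gets the `ν`-integral of the number of
points of `E` (counted with multiplicity, `|ker π|` in all) in the fibers. The fiber count is
equivariant for right translation, so the invariance of `ν` passes to the pullback, whose total
mass is `|ker π| · ν(π(L)\H)`. The fiber count of an open set is lower semicontinuous on `G`,
hence on `π(L)\H` because `G → π(L)\H` is open; this gives measurability.
-/

open scoped ENNReal

section RightQuotient

variable {G : Type*} [Group G] (W : Subgroup G)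

@[simp]
lemma rightTranslate_mk (g x : G) :
    rightTranslate W g (Quotient.mk'' x) = Quotient.mk'' (x * g) := rfl

variable [TopologicalSpace G] [ContinuousMul G]

lemma continuous_rightTranslate (g : G) : Continuous (rightTranslate W g) :=
  (continuous_mul_const g).quotient_map' _

lemma isOpenMap_rightQuotient_mk :
    IsOpenMap (Quotient.mk'' : G → RightQuotient W) :=
  isOpenMap_quotient_mk'_mul

end RightQuotient

lemma IsOpenMap.lowerSemicontinuous_of_comp {X Y : Type*} [TopologicalSpace X]
    [TopologicalSpace Y] {f : X → Y} {F : Y → ℝ≥0∞} (hf : IsOpenMap f)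
    (hsurj : Function.Surjective f) (hF : LowerSemicontinuous (F ∘ f)) :
    LowerSemicontinuous F := by
  rw [lowerSemicontinuous_iff_isOpen_preimage] at hF ⊢
  intro t
  rw [← hsurj.image_preimage (F ⁻¹' _)]
  exact hf _ (hF t)

section FiberMeasure

variable {G : Type*} [Group G] (L K : Subgroup G) [MeasurableSpace (RightQuotient L)]

/-- The sum of the Dirac masses at the cosets `L g k`, `k ∈ K`; for `K = ker π` it counts, with
multiplicity, the fiber of `L\G → π(L)\H` over `π(L) π(g)`. -/
noncomputable def fiberMeasure (g : G) : Measure (RightQuotient L) :=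
  Measure.sum fun k : K => Measure.dirac (Quotient.mk'' (g * k))

variable {L K}

lemma fiberMeasure_apply (g : G) {E : Set (RightQuotient L)} (hE : MeasurableSet E) :
    fiberMeasure L K g E = ∑' k : K, E.indicator 1 (Quotient.mk'' (g * k)) := by
  simp only [fiberMeasure, Measure.sum_apply _ hE, Measure.dirac_apply' _ hE]

lemma fiberMeasure_univ (g : G) : fiberMeasure L K g Set.univ = ENat.card K := by
  simp [fiberMeasure_apply g MeasurableSet.univ, ENNReal.tsum_one]

instance [Finite K] (g : G) : IsFiniteMeasure (fiberMeasure L K g) :=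
  ⟨by simp [fiberMeasure_univ]⟩

lemma fiberMeasure_mul_left_of_mem {l : G} (hl : l ∈ L) (g : G) :
    fiberMeasure L K (l * g) = fiberMeasure L K g := by
  have hmk (k : G) : (Quotient.mk'' (l * g * k) : RightQuotient L) = Quotient.mk'' (g * k) := by
    rw [Quotient.eq'', QuotientGroup.rightRel_apply]
    simpa [mul_assoc] using inv_mem hl
  simp only [fiberMeasure, hmk]

lemma fiberMeasure_mul_right_of_mem {z : G} (hz : z ∈ K) (g : G) :
    fiberMeasure L K (g * z) = fiberMeasure L K g := by
  simpa [fiberMeasure, Function.comp_def, mul_assoc] using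
    Measure.sum_comp_equiv (Equiv.mulLeft (⟨z, hz⟩ : K))
      fun k : K => Measure.dirac (Quotient.mk'' (g * k) : RightQuotient L)

end FiberMeasure

section Topology

variable {G : Type*} [Group G] [TopologicalSpace G] [ContinuousMul G] {L K : Subgroup G}
  [MeasurableSpace (RightQuotient L)] [BorelSpace (RightQuotient L)]

lemma map_rightTranslate_fiberMeasure [K.Normal] (g h : G) :
    (fiberMeasure L K g).map (rightTranslate L h) = fiberMeasure L K (g * h) := by
  have hT := (continuous_rightTranslate L h).measurable
  rw [fiberMeasure, Measure.map_sum hT.aemeasurable]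
  simp only [Measure.map_dirac' hT, rightTranslate_mk]
  -- `g k h = (g h) (h⁻¹ k h)`, and conjugation by `h` permutes the normal subgroup `K`
  simpa [fiberMeasure, Function.comp_def, mul_assoc] using
    Measure.sum_comp_equiv (MulAut.conjNormal h⁻¹).toEquiv
      fun k : K => Measure.dirac (Quotient.mk'' (g * h * k) : RightQuotient L)

lemma lowerSemicontinuous_fiberMeasure_apply {U : Set (RightQuotient L)} (hU : IsOpen U) :
    LowerSemicontinuous fun g => fiberMeasure L K g U := by
  simp only [fiberMeasure_apply _ hU.measurableSet]
  exact lowerSemicontinuous_tsum fun k => (hU.lowerSemicontinuous_indicator zero_le_one).comp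
    (continuous_quotient_mk'.comp (continuous_mul_const (k : G)))

end Topology

section Descent

variable {G H : Type*} [Group G] [Group H] (π : G →* H) (L : Subgroup G)

def imageCoset (g : G) : RightQuotient (L.map π) := Quotient.mk'' (π g)

variable {π L}

lemma fiberMeasure_eq_of_imageCoset_eq [MeasurableSpace (RightQuotient L)] {a b : G}
    (h : imageCoset π L a = imageCoset π L b) :
    fiberMeasure L π.ker a = fiberMeasure L π.ker b := by
  obtain ⟨l, hl, hπl⟩ : π b * (π a)⁻¹ ∈ L.map π := by
    rwa [imageCoset, imageCoset, Quotient.eq'', QuotientGroup.rightRel_apply] at h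
  have hz : (l * a)⁻¹ * b ∈ π.ker := by
    rw [MonoidHom.mem_ker, map_mul, map_inv, map_mul, hπl]
    group
  rw [← mul_inv_cancel_left (l * a) b, fiberMeasure_mul_right_of_mem hz,
    fiberMeasure_mul_left_of_mem hl]

lemma surjective_imageCoset (hsurj : Function.Surjective π) :
    Function.Surjective (imageCoset π L) :=
  Quotient.mk''_surjective.comp hsurj

lemma isOpenMap_imageCoset [TopologicalSpace G] [TopologicalSpace H] [ContinuousMul H]
    (hopen : IsOpenMap π) : IsOpenMap (imageCoset π L) :=
  (isOpenMap_rightQuotient_mk _).comp hopen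

lemma rightTranslate_imageCoset (g h : G) :
    rightTranslate (L.map π) (π h) (imageCoset π L g) = imageCoset π L (g * h) := by
  simp [imageCoset]

variable (π L) [MeasurableSpace (RightQuotient L)]

/-- `fiberMeasure L (ker π)` descended to `π(L)\H`, evaluated at an arbitrary representative. -/
noncomputable def fiberKernel (y : RightQuotient (L.map π)) : Measure (RightQuotient L) :=
  fiberMeasure L π.ker (Function.invFun (imageCoset π L) y)

variable {π L}

lemma fiberKernel_imageCoset (g : G) :
    fiberKernel π L (imageCoset π L g) = fiberMeasure L π.ker g :=
  fiberMeasure_eq_of_imageCoset_eq (Function.invFun_eq ⟨g, rfl⟩)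

instance [Finite π.ker] (y : RightQuotient (L.map π)) : IsFiniteMeasure (fiberKernel π L y) := by
  unfold fiberKernel
  infer_instance

end Descent

section Pullback

variable {G H : Type*} [Group G] [TopologicalSpace G] [ContinuousMul G]
  [Group H] [TopologicalSpace H] [ContinuousMul H] {π : G →* H} {L : Subgroup G}
  [MeasurableSpace (RightQuotient L)] [BorelSpace (RightQuotient L)]
  [MeasurableSpace (RightQuotient (L.map π))] [BorelSpace (RightQuotient (L.map π))]
  [Finite π.ker] (hsurj : Function.Surjective π) (hopen : IsOpenMap π)
include hsurj hopen

lemma measurable_fiberKernel : Measurable (fiberKernel π L) := by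
  refine .measure_of_isPiSystem BorelSpace.measurable_eq isPiSystem_isOpen (fun U hU => ?_) ?_
  · refine ((isOpenMap_imageCoset hopen).lowerSemicontinuous_of_comp
      (surjective_imageCoset hsurj) ?_).measurable
    simpa only [Function.comp_def, fiberKernel_imageCoset] using
      lowerSemicontinuous_fiberMeasure_apply hU
  · simp only [fiberKernel, fiberMeasure_univ]
    exact measurable_const

lemma bind_fiberKernel_univ (ν : Measure (RightQuotient (L.map π))) :
    ν.bind (fiberKernel π L) Set.univ = ENat.card π.ker * ν Set.univ := by
  rw [Measure.bind_apply .univ (measurable_fiberKernel hsurj hopen).aemeasurable]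
  simp [fiberKernel, fiberMeasure_univ]

lemma bind_fiberKernel_preimage_rightTranslate {ν : Measure (RightQuotient (L.map π))}
    (hν : ∀ h s, MeasurableSet s → ν (rightTranslate (L.map π) h ⁻¹' s) = ν s)
    (g : G) {E : Set (RightQuotient L)} (hE : MeasurableSet E) :
    ν.bind (fiberKernel π L) (rightTranslate L g ⁻¹' E) = ν.bind (fiberKernel π L) E := by
  have hκ := measurable_fiberKernel (L := L) hsurj hopen
  have hT := (continuous_rightTranslate (L.map π) (π g)).measurable
  have hνT : MeasurePreserving (rightTranslate (L.map π) (π g)) ν ν :=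
    ⟨hT, Measure.ext fun s hs => by rw [Measure.map_apply hT hs, hν _ _ hs]⟩
  have hequiv (y) : fiberKernel π L y (rightTranslate L g ⁻¹' E) =
      fiberKernel π L (rightTranslate (L.map π) (π g) y) E := by
    obtain ⟨g₀, rfl⟩ := surjective_imageCoset hsurj y
    rw [rightTranslate_imageCoset, fiberKernel_imageCoset, fiberKernel_imageCoset,
      ← map_rightTranslate_fiberMeasure,
      Measure.map_apply (continuous_rightTranslate L g).measurable hE]
  rw [Measure.bind_apply ((continuous_rightTranslate L g).measurable hE) hκ.aemeasurable,
    Measure.bind_apply hE hκ.aemeasurable, lintegral_congr hequiv]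
  exact hνT.lintegral_comp ((Measure.measurable_coe hE).comp hκ)

end Pullback

theorem statement9_general {G H : Type*}
    [Group G] [TopologicalSpace G] [IsTopologicalGroup G]
    [Group H] [TopologicalSpace H] [IsTopologicalGroup H]
    (π : G →* H) (hsurj : Function.Surjective π)
    (hopen : IsOpenMap π) (hker : (π.ker : Set G).Finite)
    (L : Subgroup G) (hLdisc : DiscreteTopology L)
    (hlat : IsLattice H (L.map π)) :
    IsLattice G L := by
  obtain ⟨-, ν, hν0, hνfin, hνinv⟩ := hlat
  let _ : MeasurableSpace (RightQuotient L) := borel _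
  have _ : BorelSpace (RightQuotient L) := ⟨rfl⟩
  let _ : MeasurableSpace (RightQuotient (L.map π)) := borel _
  have _ : BorelSpace (RightQuotient (L.map π)) := ⟨rfl⟩
  have _ : Finite π.ker := hker.to_subtype
  refine ⟨hLdisc, ν.bind (fiberKernel π L), ?_, ?_,
    fun g E hE => bind_fiberKernel_preimage_rightTranslate hsurj hopen hνinv g hE⟩
  · rw [← Measure.measure_univ_ne_zero, bind_fiberKernel_univ hsurj hopen]
    exact mul_ne_zero (ENat.toENNReal_eq_zero.not.2 ENat.card_ne_zero)
      (Measure.measure_univ_ne_zero.2 hν0)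
  · rw [bind_fiberKernel_univ hsurj hopen]
    exact ENNReal.mul_lt_top (ENat.toENNReal_lt_top.2 ENat.card_lt_top_of_finite) hνfin

/-- Let `G` and `H` be locally compact Hausdorff unimodular topological
groups and `π : G → H` a continuous surjective open homomorphism with finite kernel.
Let `L` be a discrete subgroup of `G`.  If `π(L)` is a lattice in `H`, then `L` is a
lattice in `G`. -/
theorem statement9 {G H : Type*}
    [Group G] [TopologicalSpace G] [IsTopologicalGroup G] [T2Space G] [LocallyCompactSpace G]
    [MeasurableSpace G] [BorelSpace G]
    (μG : Measure G) [μG.IsHaarMeasure] [μG.IsMulRightInvariant]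
    [Group H] [TopologicalSpace H] [IsTopologicalGroup H] [T2Space H] [LocallyCompactSpace H]
    [MeasurableSpace H] [BorelSpace H]
    (μH : Measure H) [μH.IsHaarMeasure] [μH.IsMulRightInvariant]
    (π : G →* H) (hcont : Continuous π) (hsurj : Function.Surjective π)
    (hopen : IsOpenMap π) (hker : (π.ker : Set G).Finite)
    (L : Subgroup G) (hLdisc : DiscreteTopology L)
    (hlat : IsLattice H (L.map π)) :
    IsLattice G L :=
  statement9_general π hsurj hopen hker L hLdisc hlat
end

section
/- Let G be a topological group and L ⊆ L' subgroups of G with L of finite index in L'. Then the connected component of the identity in the closure of L' (in G) equals the connected component of the identity in the closure of L; in particular, the closure of L has finite index in the closure of L'. -/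
/-!
For a closed subgroup `K`, the index of `K` in a subgroup `M` is the number of points of the
image of `M` in the T1 space `G ⧸ K`. When this image is finite it is closed and discrete, so
passing from `M` to its closure does not change it, and the connected component of `1` in `M`
maps to a single point, i.e. lies in `K`. Apply this to `K = closure L` and `M = closure L'`.
-/

open Set

section

variable {G : Type*} [Group G]

theorem Subgroup.relIndex_eq_ncard_image_mk (K M : Subgroup G) :
    K.relIndex M = (((↑) : G → G ⧸ K) '' M).ncard := by
  have hsmul (x : M) : x • ((1 : G) : G ⧸ K) = (x : G) := congrArg _ (mul_one (x : G))
  have hstab : K.subgroupOf M = MulAction.stabilizer M ((1 : G) : G ⧸ K) := by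
    ext
    simp [mem_subgroupOf, QuotientGroup.eq, hsmul]
  have horbit : MulAction.orbit M ((1 : G) : G ⧸ K) = ((↑) : G → G ⧸ K) '' M := by
    ext
    simp [MulAction.mem_orbit_iff, hsmul]
  rw [relIndex, hstab, MulAction.index_stabilizer, horbit]

variable [TopologicalSpace G] [IsTopologicalGroup G] {K : Subgroup G}

theorem Subgroup.relIndex_topologicalClosure (hK : IsClosed (K : Set G)) (M : Subgroup G) :
    K.relIndex M.topologicalClosure = K.relIndex M := by
  have : T1Space (G ⧸ K) := QuotientGroup.t1Space_iff.mpr hK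
  rw [relIndex_eq_ncard_image_mk, relIndex_eq_ncard_image_mk, topologicalClosure_coe]
  set π : G → G ⧸ K := (↑)
  have hsub : π '' M ⊆ π '' _root_.closure (M : Set G) := image_mono _root_.subset_closure
  by_cases hfin : (π '' M).Finite
  · have hclosure : _root_.closure (M : Set G) ⊆ π ⁻¹' (π '' M) :=
      closure_minimal (subset_preimage_image _ _)
        (hfin.isClosed.preimage QuotientGroup.continuous_mk)
    rw [subset_antisymm (image_subset_iff.mpr hclosure) hsub]
  · rw [Infinite.ncard hfin, Infinite.ncard fun h => hfin (h.subset hsub)]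

theorem Subgroup.connectedComponentIn_subset_of_relIndex_ne_zero (hK : IsClosed (K : Set G))
    {M : Subgroup G} (hKM : K.relIndex M ≠ 0) : connectedComponentIn (M : Set G) 1 ⊆ K := by
  have : T1Space (G ⧸ K) := QuotientGroup.t1Space_iff.mpr hK
  rw [relIndex_eq_ncard_image_mk] at hKM
  intro x hx
  have hx1 : ((x : G) : G ⧸ K) = ((1 : G) : G ⧸ K) :=
    isPreconnected_connectedComponentIn.constant_of_mapsTo
      (finite_of_ncard_ne_zero hKM).isDiscrete QuotientGroup.continuous_mk.continuousOn
      (fun y hy => mem_image_of_mem _ (connectedComponentIn_subset _ _ hy)) hx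
      (mem_connectedComponentIn M.one_mem)
  simpa [QuotientGroup.eq] using hx1

end

/-- Let `G` be a topological group and `L ⊆ L'` subgroups of `G` with
`L` of finite index in `L'`.  Then the connected component of the identity in the
closure of `L'` equals the connected component of the identity in the closure of `L`;
in particular, the closure of `L` has finite index in the closure of `L'`. -/
theorem statement10 {G : Type*} [Group G] [TopologicalSpace G] [IsTopologicalGroup G]
    (L L' : Subgroup G) (hLL' : L ≤ L') (hfin : L.relIndex L' ≠ 0) :
    connectedComponentIn (closure (L' : Set G)) 1
      = connectedComponentIn (closure (L : Set G)) 1 ∧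
    L.topologicalClosure.relIndex L'.topologicalClosure ≠ 0 := by
  have hclosed := L.isClosed_topologicalClosure
  have hindex : L.topologicalClosure.relIndex L'.topologicalClosure ≠ 0 := by
    rw [Subgroup.relIndex_topologicalClosure hclosed]
    exact mt (Subgroup.relIndex_eq_zero_of_le_left L.le_topologicalClosure) hfin
  have hcomponent := Subgroup.connectedComponentIn_subset_of_relIndex_ne_zero hclosed hindex
  rw [Subgroup.topologicalClosure_coe, Subgroup.topologicalClosure_coe] at hcomponent
  refine ⟨subset_antisymm ?_ (connectedComponentIn_mono _ (closure_mono hLL')), hindex⟩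
  exact isPreconnected_connectedComponentIn.subset_connectedComponentIn
    (mem_connectedComponentIn (subset_closure L'.one_mem)) hcomponent
end

section
/- Let B be the 3×3 integer symmetric matrix [[1,−1,0],[−1,1,−1],[0,−1,1]], and let O(B)(ℤ) = {g ∈ GL(3,ℤ) : gᵀ B g = B}. Then the subgroup of O(B)(ℤ) generated by the three matrices ρ(s₁) = [[−1,2,0],[0,1,0],[0,0,1]], ρ(s₂) = [[1,0,0],[2,−1,2],[0,0,1]], ρ(s₃) = [[1,0,0],[0,1,0],[0,2,−1]] has finite index in O(B)(ℤ). -/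
/-!
Let `Q(x) = xᵀ B x = (x₀ - x₁)² + (x₂ - x₁)² - x₁²`. Every `g ∈ O(B)(ℤ)` sends `𝟙 = (1, 1, 1)`,
with `Q(𝟙) = -1`, to an integral solution of `Q(x) = -1`. On such an `x`, `ρ(s₁)` and `ρ(s₃)`
reflect `x₀` and `x₂` through `x₁`, and after a suitable choice of these reflections `ρ(s₂)`
replaces `x₁` by `2x₀ - x₁ + 2x₂`, which is strictly smaller in absolute value unless `x = ±𝟙`.
So every `g` is `h s` with `h` in the group generated by the `ρ(sᵢ)` and `s` mapping `𝟙` to `±𝟙`.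
Such an `s` preserves the `B`-orthogonal complement `{x₁ = 0}` of `𝟙`, on which `Q = x₀² + x₂²`
is positive definite; this bounds the entries of `s`, so there are finitely many of them.
-/

open Matrix

/-- The Tits form matrix `B` of the right-angled Coxeter group with
`m₁₂ = m₂₃ = ∞`, `m₁₃ = 2`. -/
def Bmat : Matrix (Fin 3) (Fin 3) ℤ := !![1, -1, 0; -1, 1, -1; 0, -1, 1]

/-- The group `O(B)(ℤ) = {g ∈ GL(3, ℤ) : gᵀ B g = B}` as a subgroup of `GL(3, ℤ)`. -/
def OBZ : Subgroup (GL (Fin 3) ℤ) where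
  carrier := {g | ((g : Matrix (Fin 3) (Fin 3) ℤ))ᵀ * Bmat * (g : Matrix (Fin 3) (Fin 3) ℤ)
    = Bmat}
  one_mem' := by simp
  mul_mem' := by
    intro a b ha hb
    simp only [Set.mem_setOf_eq, Units.val_mul, transpose_mul] at *
    calc (b : Matrix (Fin 3) (Fin 3) ℤ)ᵀ * (a : Matrix (Fin 3) (Fin 3) ℤ)ᵀ * Bmat *
          ((a : Matrix (Fin 3) (Fin 3) ℤ) * (b : Matrix (Fin 3) (Fin 3) ℤ))
        = (b : Matrix (Fin 3) (Fin 3) ℤ)ᵀ *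
          ((a : Matrix (Fin 3) (Fin 3) ℤ)ᵀ * Bmat * (a : Matrix (Fin 3) (Fin 3) ℤ)) *
          (b : Matrix (Fin 3) (Fin 3) ℤ) := by noncomm_ring
      _ = Bmat := by rw [ha, hb]
  inv_mem' := by
    intro a ha
    simp only [Set.mem_setOf_eq] at *
    calc ((a⁻¹ : GL (Fin 3) ℤ) : Matrix (Fin 3) (Fin 3) ℤ)ᵀ * Bmat *
          ((a⁻¹ : GL (Fin 3) ℤ) : Matrix (Fin 3) (Fin 3) ℤ)
        = ((a⁻¹ : GL (Fin 3) ℤ) : Matrix (Fin 3) (Fin 3) ℤ)ᵀ *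
          ((a : Matrix (Fin 3) (Fin 3) ℤ)ᵀ * Bmat * (a : Matrix (Fin 3) (Fin 3) ℤ)) *
          ((a⁻¹ : GL (Fin 3) ℤ) : Matrix (Fin 3) (Fin 3) ℤ) := by rw [ha]
      _ = ((a : Matrix (Fin 3) (Fin 3) ℤ) *
            ((a⁻¹ : GL (Fin 3) ℤ) : Matrix (Fin 3) (Fin 3) ℤ))ᵀ * Bmat *
          ((a : Matrix (Fin 3) (Fin 3) ℤ) *
            ((a⁻¹ : GL (Fin 3) ℤ) : Matrix (Fin 3) (Fin 3) ℤ)) := by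
        rw [transpose_mul]; noncomm_ring
      _ = Bmat := by rw [← Units.val_mul, mul_inv_cancel]; simp

/-- The image `ρ(s₁)` of the first generator, as an element of `GL(3, ℤ)`. -/
def rho1 : GL (Fin 3) ℤ :=
  ⟨!![-1, 2, 0; 0, 1, 0; 0, 0, 1], !![-1, 2, 0; 0, 1, 0; 0, 0, 1], by decide, by decide⟩

/-- The image `ρ(s₂)` of the second generator, as an element of `GL(3, ℤ)`. -/
def rho2 : GL (Fin 3) ℤ :=
  ⟨!![1, 0, 0; 2, -1, 2; 0, 0, 1], !![1, 0, 0; 2, -1, 2; 0, 0, 1], by decide, by decide⟩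

/-- The image `ρ(s₃)` of the third generator, as an element of `GL(3, ℤ)`. -/
def rho3 : GL (Fin 3) ℤ :=
  ⟨!![1, 0, 0; 0, 1, 0; 0, 2, -1], !![1, 0, 0; 0, 1, 0; 0, 2, -1], by decide, by decide⟩

theorem Subgroup.relIndex_ne_zero_of_forall_exists_mul_mem {G : Type*} [Group G]
    {H K : Subgroup G} (hHK : H ≤ K) {T : Set G} (hT : T.Finite)
    (hK : ∀ k ∈ K, ∃ h ∈ H, h * k ∈ T) : H.relIndex K ≠ 0 := by
  have : Finite ↥(T ∩ K) := (hT.subset Set.inter_subset_left).to_subtype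
  have : Finite (K ⧸ H.subgroupOf K) := by
    refine Finite.of_surjective
      (fun t : ↥(T ∩ K) ↦ ((⟨t⁻¹, K.inv_mem t.2.2⟩ : K) : K ⧸ H.subgroupOf K)) ?_
    rintro ⟨⟨k, hk⟩⟩
    obtain ⟨h, hh, hhk⟩ := hK k⁻¹ (K.inv_mem hk)
    refine ⟨⟨h * k⁻¹, hhk, K.mul_mem (hHK hh) (K.inv_mem hk)⟩, QuotientGroup.eq.2 ?_⟩
    simpa [Subgroup.mem_subgroupOf] using hh
  exact Subgroup.index_ne_zero_of_finite

theorem Matrix.GeneralLinearGroup.finite_setOf_abs_le {n : Type*} [Fintype n] [DecidableEq n]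
    (N : ℤ) : {g : GL n ℤ | ∀ i j, |(g : Matrix n n ℤ) i j| ≤ N}.Finite := by
  have hbox : (Set.univ.pi fun _ : n ↦ Set.univ.pi fun _ : n ↦ Set.Icc (-N) N).Finite :=
    Set.Finite.pi fun _ ↦ Set.Finite.pi fun _ ↦ Set.finite_Icc _ _
  refine (hbox.preimage (f := fun g : GL n ℤ ↦ (g : Matrix n n ℤ))
    fun a _ b _ h ↦ Units.ext h).subset fun g hg i _ j _ ↦ ?_
  exact abs_le.1 (hg i j)

lemma dotProduct_Bmat_mulVec_of_isometry {M : Matrix (Fin 3) (Fin 3) ℤ}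
    (hM : Mᵀ * Bmat * M = Bmat) (x y : Fin 3 → ℤ) :
    (M *ᵥ x) ⬝ᵥ Bmat *ᵥ (M *ᵥ y) = x ⬝ᵥ Bmat *ᵥ y := by
  rw [← vecMul_transpose, ← dotProduct_mulVec, mulVec_mulVec, mulVec_mulVec, hM]

lemma dotProduct_Bmat_mulVec_self (x : Fin 3 → ℤ) :
    x ⬝ᵥ Bmat *ᵥ x = (x 0 - x 1) ^ 2 + (x 2 - x 1) ^ 2 - x 1 ^ 2 := by
  simp only [Bmat, mulVec, vec3_dotProduct, of_apply, cons_val', cons_val_zero, cons_val_one,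
    cons_val, cons_val_fin_one]
  ring

lemma Bmat_mulVec_one : Bmat *ᵥ 1 = ![0, -1, 0] := by
  ext i; fin_cases i <;> simp [Bmat, mulVec, dotProduct, Fin.sum_univ_three]

lemma mulVec_apply_one_eq_zero {M : Matrix (Fin 3) (Fin 3) ℤ} (hM : Mᵀ * Bmat * M = Bmat)
    (hv : M *ᵥ 1 = 1 ∨ M *ᵥ 1 = -1) {x : Fin 3 → ℤ} (hx : x 1 = 0) : (M *ᵥ x) 1 = 0 := by
  have := dotProduct_Bmat_mulVec_of_isometry hM x 1
  rcases hv with hv | hv <;>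
    simpa [hv, hx, mulVec_neg, Bmat_mulVec_one, dotProduct, Fin.sum_univ_three] using this

lemma abs_apply_le_three {M : Matrix (Fin 3) (Fin 3) ℤ} (hM : Mᵀ * Bmat * M = Bmat)
    (hv : M *ᵥ 1 = 1 ∨ M *ᵥ 1 = -1) (i j : Fin 3) : |M i j| ≤ 3 := by
  have hcol (k : Fin 3) (hk : k ≠ 1) : M 1 k = 0 ∧ M 0 k ^ 2 + M 2 k ^ 2 = 1 := by
    have h1 := mulVec_apply_one_eq_zero hM hv (x := Pi.single k 1) (by simp [hk.symm])
    have hQ := dotProduct_Bmat_mulVec_of_isometry hM (Pi.single k 1) (Pi.single k 1)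
    simp only [dotProduct_Bmat_mulVec_self, mulVec_single_one] at h1 hQ
    refine ⟨h1, ?_⟩
    fin_cases k <;> simp_all [Bmat]
  have hrow (k : Fin 3) : M k 0 + M k 1 + M k 2 = 1 ∨ M k 0 + M k 1 + M k 2 = -1 := by
    rcases hv with hv | hv <;> [left; right] <;>
      simpa [mulVec, dotProduct, Fin.sum_univ_three] using congrFun hv k
  have hsq {a b : ℤ} (h : a ^ 2 + b ^ 2 = 1) : -1 ≤ a ∧ a ≤ 1 ∧ -1 ≤ b ∧ b ≤ 1 := by
    refine ⟨?_, ?_, ?_, ?_⟩ <;> nlinarith [sq_nonneg a, sq_nonneg b]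
  obtain ⟨h10, h0⟩ := hcol 0 (by decide)
  obtain ⟨h12, h2⟩ := hcol 2 (by decide)
  have b0 := hsq h0
  have b2 := hsq h2
  have r0 := hrow 0
  have r1 := hrow 1
  have r2 := hrow 2
  rw [abs_le]
  fin_cases i <;> fin_cases j <;> dsimp only [Fin.zero_eta, Fin.mk_one, Fin.reduceFinMk] <;>
    omega

lemma finite_setOf_mem_OBZ_mulVec_one : {g : GL (Fin 3) ℤ | g ∈ OBZ ∧
    ((g : Matrix (Fin 3) (Fin 3) ℤ) *ᵥ 1 = 1 ∨ (g : Matrix (Fin 3) (Fin 3) ℤ) *ᵥ 1 = -1)}.Finite :=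
  (Matrix.GeneralLinearGroup.finite_setOf_abs_le 3).subset fun _ ⟨hg, hv⟩ ↦
    abs_apply_le_three hg hv

lemma sq_ne_sq_add_one {n b : ℤ} (hn : 2 ≤ n) (hb : 0 ≤ b) : n ^ 2 ≠ b ^ 2 + 1 := by
  intro h
  have : b < n := by nlinarith
  nlinarith

lemma abs_three_mul_sub_lt {n a b : ℤ} (hn : 2 ≤ n) (ha : 0 ≤ a) (hb : 0 ≤ b)
    (h : n ^ 2 = a ^ 2 + b ^ 2 + 1) : |3 * n - 2 * a - 2 * b| < n := by
  have ha1 : 1 ≤ a := by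
    by_contra! ha0
    obtain rfl : a = 0 := by omega
    exact sq_ne_sq_add_one hn hb (by simpa using h)
  have hb1 : 1 ≤ b := by
    by_contra! hb0
    obtain rfl : b = 0 := by omega
    exact sq_ne_sq_add_one hn ha (by simpa using h)
  rw [abs_lt]
  constructor <;> nlinarith [sq_nonneg (a - b)]

lemma exists_reflect_abs_lt {p q r : ℤ} (h : q ^ 2 = (p - q) ^ 2 + (r - q) ^ 2 + 1)
    (hq : 2 ≤ |q|) : ∃ a ∈ ({p, 2 * q - p} : Set ℤ), ∃ b ∈ ({r, 2 * q - r} : Set ℤ),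
      |2 * a - q + 2 * b| < |q| := by
  have hmem {s : ℤ} (c : ℤ) (hc : c = s - q ∨ c = -(s - q)) :
      q + c ∈ ({s, 2 * q - s} : Set ℤ) := by
    simp only [Set.mem_insert_iff, Set.mem_singleton_iff]
    rcases hc with rfl | rfl
    · left; ring
    · right; ring
  have hcore :=
    abs_three_mul_sub_lt hq (abs_nonneg (p - q)) (abs_nonneg (r - q)) (by simpa using h)
  rcases le_or_gt 0 q with hq0 | hq0
  · refine ⟨_, hmem (-|p - q|) ?_, _, hmem (-|r - q|) ?_, ?_⟩
    · rcases abs_choice (p - q) with h' | h' <;> simp [h']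
    · rcases abs_choice (r - q) with h' | h' <;> simp [h']
    · rw [abs_of_nonneg hq0] at hcore ⊢
      convert hcore using 2; ring
  · refine ⟨_, hmem |p - q| (abs_choice _), _, hmem |r - q| (abs_choice _), ?_⟩
    rw [abs_of_neg hq0] at hcore ⊢
    rw [← abs_neg]
    convert hcore using 2; ring

def rhoW : Subgroup (GL (Fin 3) ℤ) := Subgroup.closure {rho1, rho2, rho3}

lemma rho1_mem_rhoW : rho1 ∈ rhoW := Subgroup.subset_closure (by simp)
lemma rho2_mem_rhoW : rho2 ∈ rhoW := Subgroup.subset_closure (by simp)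
lemma rho3_mem_rhoW : rho3 ∈ rhoW := Subgroup.subset_closure (by simp)

lemma rhoW_le_OBZ : rhoW ≤ OBZ := by
  simp only [rhoW, Subgroup.closure_le, Set.insert_subset_iff, Set.singleton_subset_iff]
  refine ⟨?_, ?_, ?_⟩ <;> show (_ : Matrix (Fin 3) (Fin 3) ℤ)ᵀ * Bmat * _ = Bmat <;> decide

lemma rho1_mulVec (x : Fin 3 → ℤ) :
    (rho1 : Matrix (Fin 3) (Fin 3) ℤ) *ᵥ x = ![2 * x 1 - x 0, x 1, x 2] := by
  ext i; fin_cases i <;> simp [rho1, mulVec, dotProduct, Fin.sum_univ_three, neg_add_eq_sub]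

lemma rho2_mulVec (x : Fin 3 → ℤ) :
    (rho2 : Matrix (Fin 3) (Fin 3) ℤ) *ᵥ x = ![x 0, 2 * x 0 - x 1 + 2 * x 2, x 2] := by
  ext i; fin_cases i <;> simp [rho2, mulVec, dotProduct, Fin.sum_univ_three, sub_eq_add_neg]

lemma rho3_mulVec (x : Fin 3 → ℤ) :
    (rho3 : Matrix (Fin 3) (Fin 3) ℤ) *ᵥ x = ![x 0, x 1, 2 * x 1 - x 2] := by
  ext i; fin_cases i <;> simp [rho3, mulVec, dotProduct, Fin.sum_univ_three, sub_eq_add_neg]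

lemma exists_mem_rhoW_mulVec_eq (x : Fin 3 → ℤ) {a b : ℤ}
    (ha : a ∈ ({x 0, 2 * x 1 - x 0} : Set ℤ)) (hb : b ∈ ({x 2, 2 * x 1 - x 2} : Set ℤ)) :
    ∃ s ∈ rhoW, (s : Matrix (Fin 3) (Fin 3) ℤ) *ᵥ x = ![a, x 1, b] := by
  obtain ⟨t, ht, htx⟩ : ∃ t ∈ rhoW, (t : Matrix (Fin 3) (Fin 3) ℤ) *ᵥ x = ![x 0, x 1, b] := by
    rcases hb with rfl | rfl
    · exact ⟨1, one_mem _, by ext i; fin_cases i <;> simp⟩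
    · exact ⟨rho3, rho3_mem_rhoW, rho3_mulVec x⟩
  rcases ha with rfl | rfl
  · exact ⟨t, ht, htx⟩
  · refine ⟨rho1 * t, mul_mem rho1_mem_rhoW ht, ?_⟩
    rw [Units.val_mul, ← mulVec_mulVec, htx, rho1_mulVec]
    simp

lemma eq_one_or_eq_neg_one_of_abs_lt_two {x : Fin 3 → ℤ} (hx : x ⬝ᵥ Bmat *ᵥ x = -1)
    (h : |x 1| < 2) : x = 1 ∨ x = -1 := by
  rw [dotProduct_Bmat_mulVec_self] at hx
  have hx1 : x 1 ^ 2 = 1 := by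
    have : x 1 ^ 2 ≤ 1 := by rw [← sq_abs]; nlinarith [abs_nonneg (x 1)]
    nlinarith [sq_nonneg (x 0 - x 1), sq_nonneg (x 2 - x 1)]
  have h0 : x 0 = x 1 := by nlinarith [sq_nonneg (x 0 - x 1), sq_nonneg (x 2 - x 1)]
  have h2 : x 2 = x 1 := by nlinarith [sq_nonneg (x 0 - x 1), sq_nonneg (x 2 - x 1)]
  have hx1' : x 1 ≠ 0 := by rintro h; simp [h] at hx1
  rw [abs_lt] at h
  obtain h1 | h1 : x 1 = 1 ∨ x 1 = -1 := by omega
  · left; ext i; fin_cases i <;> simp [h0, h1, h2]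
  · right; ext i; fin_cases i <;> simp [h0, h1, h2]

theorem exists_mem_rhoW_mulVec_eq_one_or_neg_one (x : Fin 3 → ℤ)
    (hx : x ⬝ᵥ Bmat *ᵥ x = -1) :
    ∃ h ∈ rhoW, (h : Matrix (Fin 3) (Fin 3) ℤ) *ᵥ x = 1 ∨
      (h : Matrix (Fin 3) (Fin 3) ℤ) *ᵥ x = -1 := by
  induction hn : (x 1).natAbs using Nat.strong_induction_on generalizing x with
  | _ n ih =>
  by_cases hq : |x 1| < 2
  · exact ⟨1, one_mem _, by simpa using eq_one_or_eq_neg_one_of_abs_lt_two hx hq⟩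
  obtain ⟨a, ha, b, hb, hlt⟩ := exists_reflect_abs_lt (p := x 0) (r := x 2)
    (by rw [dotProduct_Bmat_mulVec_self] at hx; linarith) (not_lt.1 hq)
  obtain ⟨s, hs, hsx⟩ := exists_mem_rhoW_mulVec_eq x ha hb
  have hg : rho2 * s ∈ OBZ := rhoW_le_OBZ (mul_mem rho2_mem_rhoW hs)
  have hy : ((rho2 * s : GL (Fin 3) ℤ) : Matrix (Fin 3) (Fin 3) ℤ) *ᵥ x =
      ![a, 2 * a - x 1 + 2 * b, b] := by
    rw [Units.val_mul, ← mulVec_mulVec, hsx, rho2_mulVec]; simp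
  have hdesc :
      ((((rho2 * s : GL (Fin 3) ℤ) : Matrix (Fin 3) (Fin 3) ℤ) *ᵥ x) 1).natAbs < n := by
    rw [← hn, hy, cons_val_one, cons_val_zero]
    rw [Int.abs_eq_natAbs, Int.abs_eq_natAbs] at hlt
    exact_mod_cast hlt
  obtain ⟨h, hh, hhy⟩ := ih _ hdesc _ (dotProduct_Bmat_mulVec_of_isometry hg x x ▸ hx) rfl
  refine ⟨h * (rho2 * s), mul_mem hh (mul_mem rho2_mem_rhoW hs), ?_⟩
  rwa [Units.val_mul, ← mulVec_mulVec]

/-- The subgroup of `O(B)(ℤ)` generated by `ρ(s₁), ρ(s₂), ρ(s₃)` has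
finite index in `O(B)(ℤ)`. -/
theorem statement12 :
    Subgroup.closure {rho1, rho2, rho3} ≤ OBZ ∧
    (Subgroup.closure {rho1, rho2, rho3}).relIndex OBZ ≠ 0 := by
  refine ⟨rhoW_le_OBZ, Subgroup.relIndex_ne_zero_of_forall_exists_mul_mem rhoW_le_OBZ
    finite_setOf_mem_OBZ_mulVec_one fun k hk ↦ ?_⟩
  have hQ : ((k : Matrix (Fin 3) (Fin 3) ℤ) *ᵥ 1) ⬝ᵥ
      Bmat *ᵥ ((k : Matrix (Fin 3) (Fin 3) ℤ) *ᵥ 1) = -1 := by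
    rw [dotProduct_Bmat_mulVec_of_isometry hk]; decide
  obtain ⟨h, hh, hv⟩ := exists_mem_rhoW_mulVec_eq_one_or_neg_one _ hQ
  refine ⟨h, hh, mul_mem (rhoW_le_OBZ hh) hk, ?_⟩
  rwa [Units.val_mul, ← mulVec_mulVec]
end

section
/- In the group PSL(2,ℤ) = SL(2,ℤ)/{±I}, the subgroup generated by the images of the matrices [[1,2],[0,1]] and [[1,0],[2,1]] has finite index. -/
/-!
The preimage in `SL(2, ℤ)` of the subgroup contains `-1`, `[[1,2],[0,1]]` and `[[1,0],[2,1]]`,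
and these generate the principal congruence subgroup `Γ(2)`, the kernel of reduction mod 2,
which has finite index. For the generation, run the Euclidean algorithm on the first column
`(a, c)` of `g ∈ Γ(2)`: since `a` is odd and `c` even, `|a| ≠ |c|`, and left multiplication by a
power of one of the two matrices adds an even multiple of the smaller entry to the larger one,
shrinking `|a| + |c|` until `c = 0`, where `g = ±[[1,2m],[0,1]]`.
-/

open scoped MatrixGroups
open Matrix ModularGroup CongruenceSubgroup Matrix.SpecialLinearGroup

theorem Subgroup.FiniteIndex.map_of_surjective {G G' : Type*} [Group G] [Group G']
    {H : Subgroup G} [H.FiniteIndex] {f : G →* G'} (hf : Function.Surjective f) :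
    (H.map f).FiniteIndex :=
  ⟨ne_zero_of_dvd_ne_zero FiniteIndex.index_ne_zero (H.index_map_dvd hf)⟩

theorem Int.exists_natAbs_add_two_mul_lt {a c : ℤ} (hc : c ≠ 0) (h : c.natAbs < a.natAbs) :
    ∃ k : ℤ, (a + 2 * k * c).natAbs < a.natAbs := by
  refine ⟨if (0 < a ↔ 0 < c) then -1 else 1, ?_⟩
  split_ifs <;> omega

def upperTwo : SL(2, ℤ) := ⟨!![1, 2; 0, 1], by norm_num [det_fin_two_of]⟩
def lowerTwo : SL(2, ℤ) := ⟨!![1, 0; 2, 1], by norm_num [det_fin_two_of]⟩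

lemma upperTwo_eq_T_sq : upperTwo = T ^ 2 := by
  ext i j; fin_cases i <;> fin_cases j <;> rfl

lemma coe_upperTwo_zpow (k : ℤ) : ↑(upperTwo ^ k) = !![1, 2 * k; 0, 1] := by
  rw [upperTwo_eq_T_sq, ← zpow_natCast, ← _root_.zpow_mul, coe_T_zpow]; rfl

lemma coe_lowerTwo_zpow (k : ℤ) : ↑(lowerTwo ^ k) = !![1, 0; 2 * k, 1] := by
  induction k with
  | zero => simp [one_fin_two]
  | succ n h =>
    rw [_root_.zpow_add_one, coe_mul, h]; simp [lowerTwo]; ring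
  | pred n h =>
    rw [_root_.zpow_sub_one, coe_mul, h, coe_inv]; simp [lowerTwo, adjugate_fin_two]; ring

lemma upperTwo_mem_Gamma_two : upperTwo ∈ Γ(2) := by
  rw [Gamma_mem]; decide

lemma lowerTwo_mem_Gamma_two : lowerTwo ∈ Γ(2) := by
  rw [Gamma_mem]; decide

variable (k : ℤ) (g : SL(2, ℤ))

lemma upperTwo_zpow_mul_apply_zero_zero : (upperTwo ^ k * g) 0 0 = g 0 0 + 2 * k * g 1 0 := by
  simp [coe_upperTwo_zpow, mul_apply, Fin.sum_univ_two]

lemma upperTwo_zpow_mul_apply_one_zero : (upperTwo ^ k * g) 1 0 = g 1 0 := by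
  simp [coe_upperTwo_zpow, mul_apply, Fin.sum_univ_two]

lemma lowerTwo_zpow_mul_apply_zero_zero : (lowerTwo ^ k * g) 0 0 = g 0 0 := by
  simp [coe_lowerTwo_zpow, mul_apply, Fin.sum_univ_two]

lemma lowerTwo_zpow_mul_apply_one_zero : (lowerTwo ^ k * g) 1 0 = g 1 0 + 2 * k * g 0 0 := by
  simp [coe_lowerTwo_zpow, mul_apply, Fin.sum_univ_two]; ring

variable {k g}

lemma exists_eq_upperTwo_zpow_of_apply_one_zero_eq_zero (hg : g ∈ Γ(2)) (hc : g 1 0 = 0) :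
    ∃ m : ℤ, g = upperTwo ^ m ∨ g = -upperTwo ^ m := by
  have hdet : g 0 0 * g 1 1 = 1 := by
    have := g.det_coe; rw [det_fin_two, hc] at this; linarith
  obtain ⟨m, hm⟩ : Even (g 0 1) := by
    rw [← ZMod.intCast_eq_zero_iff_even]; exact (Gamma_mem.mp hg).2.1
  rcases Int.eq_one_or_neg_one_of_mul_eq_one' hdet with ⟨ha, hd⟩ | ⟨ha, hd⟩
  · refine ⟨m, .inl ?_⟩
    ext i j; fin_cases i <;> fin_cases j <;> simp [coe_upperTwo_zpow, ha, hc, hd, hm, two_mul]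
  · refine ⟨-m, .inr ?_⟩
    ext i j; fin_cases i <;> fin_cases j <;> simp [coe_upperTwo_zpow, ha, hc, hd, hm, two_mul]

theorem Gamma_two_le_of_mem {H : Subgroup SL(2, ℤ)} (hU : upperTwo ∈ H) (hL : lowerTwo ∈ H)
    (hneg : -1 ∈ H) : Γ(2) ≤ H := by
  intro g hg
  induction hn : (g 0 0).natAbs + (g 1 0).natAbs using Nat.strong_induction_on generalizing g with
  | _ n ih =>
  by_cases hc : g 1 0 = 0
  · obtain ⟨m, rfl | rfl⟩ := exists_eq_upperTwo_zpow_of_apply_one_zero_eq_zero hg hc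
    · exact zpow_mem hU m
    · rw [← neg_one_mul]; exact mul_mem hneg (zpow_mem hU m)
  have hodd : Odd (g 0 0) := ZMod.intCast_eq_one_iff_odd.mp (Gamma_mem.mp hg).1
  have heven : Even (g 1 0) := ZMod.intCast_eq_zero_iff_even.mp (Gamma_mem.mp hg).2.2.1
  have hne : (g 1 0).natAbs ≠ (g 0 0).natAbs := by
    obtain ⟨r, hr⟩ := hodd; obtain ⟨s, hs⟩ := heven; omega
  rcases hne.lt_or_gt with hlt | hlt
  · obtain ⟨k, hk⟩ := Int.exists_natAbs_add_two_mul_lt hc hlt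
    have hmem : upperTwo ^ k * g ∈ H := ih _ (by
        rw [← hn, upperTwo_zpow_mul_apply_zero_zero, upperTwo_zpow_mul_apply_one_zero]; omega)
      (mul_mem (zpow_mem upperTwo_mem_Gamma_two k) hg) rfl
    simpa using mul_mem (zpow_mem hU (-k)) hmem
  · have ha : g 0 0 ≠ 0 := by rintro h; simp [h] at hodd
    obtain ⟨k, hk⟩ := Int.exists_natAbs_add_two_mul_lt ha hlt
    have hmem : lowerTwo ^ k * g ∈ H := ih _ (by
        rw [← hn, lowerTwo_zpow_mul_apply_zero_zero, lowerTwo_zpow_mul_apply_one_zero]; omega)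
      (mul_mem (zpow_mem lowerTwo_mem_Gamma_two k) hg) rfl
    simpa using mul_mem (zpow_mem hL (-k)) hmem

/-- In `PSL(2, ℤ) = SL(2, ℤ)/{±I}` (the quotient of `SL(2, ℤ)` by its
center), the subgroup generated by the images of `[[1,2],[0,1]]` and `[[1,0],[2,1]]`
has finite index. -/
theorem statement14 :
    (Subgroup.closure
      {QuotientGroup.mk' (Subgroup.center (Matrix.SpecialLinearGroup (Fin 2) ℤ))
        ⟨!![1, 2; 0, 1], by norm_num [Matrix.det_fin_two_of]⟩,
       QuotientGroup.mk' (Subgroup.center (Matrix.SpecialLinearGroup (Fin 2) ℤ))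
        ⟨!![1, 0; 2, 1], by norm_num [Matrix.det_fin_two_of]⟩} :
      Subgroup (Matrix.SpecialLinearGroup (Fin 2) ℤ ⧸
        Subgroup.center (Matrix.SpecialLinearGroup (Fin 2) ℤ))).FiniteIndex := by
  set π := QuotientGroup.mk' (Subgroup.center SL(2, ℤ))
  have hneg : π (-1) = 1 :=
    (QuotientGroup.eq_one_iff _).mpr (Subgroup.mem_center_iff.mpr fun g ↦ by simp)
  have hle : Γ(2).map π ≤ Subgroup.closure {π upperTwo, π lowerTwo} :=
    Subgroup.map_le_iff_le_comap.mpr <| Gamma_two_le_of_mem (Subgroup.subset_closure (by simp))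
      (Subgroup.subset_closure (by simp)) (by simp [hneg])
  have : (Γ(2).map π).FiniteIndex :=
    Subgroup.FiniteIndex.map_of_surjective (QuotientGroup.mk'_surjective _)
  exact Subgroup.finiteIndex_of_le hle
end
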